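/- For every integer k ≥ 4, the following binomial-coefficient identity holds: Σ_{r=1}^{k−2} Σ_{s=1}^{k−1} C(r−1+s, r−1)·C(2k−r−2−s, k−r−2) = ((2k)!/(k!)²)·((k−2)/(2(2k−1)))·(k−3 + 4/(k+1)), where C(a,b) denotes the binomial coefficient a choose b. -/

import Mathlib

/-!
For fixed `r`, the inner sum is the upper Chu–Vandermonde convolution
`∑_{s=0}^{k} C(a+s, a) C(b+k-s, b) = C(a+b+1+k, a+b+1)` (with `a = r-1`, `b = k-r-2`)
with its two end terms `s = 0` and `s = k` missing, so it equals `C(2k-2, k-2)` minus those.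
Summed over `r`, each of the two families of end terms is a hockey stick and gives
`C(2k-2, k-3)`; the closed form then follows from
`k C(2k,k) = 2(2k-1) C(2k-2,k-1)` and the ratios of neighbouring binomial coefficients.
-/

open Finset

theorem sum_antidiagonal_choose_add_mul_choose_add (a b n : ℕ) :
    ∑ ij ∈ antidiagonal n, (a + ij.1).choose a * (b + ij.2).choose b
      = (a + b + 1 + n).choose (a + b + 1) := by
  have h : (PowerSeries.mk 1 : PowerSeries ℤ) ^ (a + 1) * PowerSeries.mk 1 ^ (b + 1)
      = PowerSeries.mk 1 ^ (a + b + 1 + 1) := by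
    rw [← pow_add]; ring_nf
  rw [PowerSeries.mk_one_pow_eq_mk_choose_add, PowerSeries.mk_one_pow_eq_mk_choose_add,
    PowerSeries.mk_one_pow_eq_mk_choose_add] at h
  have h_coeff := congrArg (PowerSeries.coeff n) h
  simp only [PowerSeries.coeff_mul, PowerSeries.coeff_mk] at h_coeff
  exact_mod_cast h_coeff

theorem sum_Icc_one_eq_sum_range {M : Type*} [AddCommMonoid M] (f : ℕ → M) (n : ℕ) :
    ∑ i ∈ Icc 1 n, f i = ∑ i ∈ range n, f (i + 1) := by
  rw [range_eq_Ico, sum_Ico_add' f, ← Ico_add_one_right_eq_Icc]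

theorem sum_Icc_choose_add_mul_choose_add_add_ends (a b n : ℕ) :
    ∑ s ∈ Icc 1 n, (a + s).choose a * (b + (n + 1 - s)).choose b
        + (b + (n + 1)).choose b + (a + (n + 1)).choose a
      = (a + b + 1 + (n + 1)).choose (a + b + 1) := by
  rw [← sum_antidiagonal_choose_add_mul_choose_add, Nat.sum_antidiagonal_eq_sum_range_succ
    (fun i j ↦ (a + i).choose a * (b + j).choose b), sum_range_succ, sum_range_succ',
    sum_Icc_one_eq_sum_range]
  simp

theorem sum_range_choose_add_left (n k : ℕ) :
    ∑ i ∈ range (n + 1), (i + k).choose i = (n + k + 1).choose n := by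
  simp_rw [Nat.choose_symm_add, Nat.sum_range_add_choose]
  rw [add_assoc, ← Nat.choose_symm_add]

theorem sum_range_sum_Icc_choose_mul_choose_add_two_mul_choose (n : ℕ) :
    ∑ i ∈ range (n + 1), ∑ s ∈ Icc 1 (n + 2),
        (i + s).choose i * (n - i + (n + 3 - s)).choose (n - i)
      + 2 * (2 * n + 4).choose n = (n + 1) * (2 * n + 4).choose (n + 1) := by
  have inner : ∀ i ∈ range (n + 1),
      ∑ s ∈ Icc 1 (n + 2), (i + s).choose i * (n - i + (n + 3 - s)).choose (n - i)
        + (n - i + (n + 3)).choose (n - i) + (i + (n + 3)).choose i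
      = (2 * n + 4).choose (n + 1) := by
    intro i hi
    have h := sum_Icc_choose_add_mul_choose_add_add_ends i (n - i) (n + 2)
    rwa [show i + (n - i) + 1 = n + 1 by grind, show n + 1 + (n + 2 + 1) = 2 * n + 4 by ring] at h
  have ends : ∑ i ∈ range (n + 1), (i + (n + 3)).choose i = (2 * n + 4).choose n := by
    rw [sum_range_choose_add_left]; ring_nf
  have ends_reflect : ∑ i ∈ range (n + 1), (n - i + (n + 3)).choose (n - i)
      = (2 * n + 4).choose n := by
    rw [← ends, ← sum_range_reflect]
    refine sum_congr rfl fun i hi ↦ ?_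
    rw [Nat.add_sub_cancel, Nat.sub_sub_self (mem_range_succ_iff.mp hi)]
  have total := sum_congr rfl inner
  rw [sum_add_distrib, sum_add_distrib, ends, ends_reflect, sum_const, card_range,
    smul_eq_mul] at total
  lia

theorem cast_centralBinom {K : Type*} [DivisionSemiring K] [CharZero K] (n : ℕ) :
    (n.centralBinom : K) = (2 * n).factorial / n.factorial ^ 2 := by
  rw [Nat.centralBinom_eq_two_mul_choose, Nat.cast_choose K (by omega), two_mul,
    Nat.add_sub_cancel, sq]

theorem succ_mul_choose_sub_two_mul_choose (n : ℕ) :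
    (n + 1) * ((2 * n + 4).choose (n + 1) : ℝ) - 2 * (2 * n + 4).choose n
      = (n + 3).centralBinom * ((n + 1) / (2 * (2 * n + 5))) * (n + 4 / (n + 4)) := by
  have central : ((n + 3).centralBinom : ℝ)
      = 2 * (2 * n + 5) * (2 * n + 4).choose (n + 2) / (n + 3) := by
    rw [eq_div_iff (by positivity)]
    have h := Nat.succ_mul_centralBinom_succ (n + 2)
    rw [Nat.centralBinom_eq_two_mul_choose (n + 2), show 2 * (n + 2) = 2 * n + 4 by ring] at h
    have h_cast := congrArg (Nat.cast (R := ℝ)) h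
    push_cast at h_cast
    linear_combination h_cast
  have middle : ((2 * n + 4).choose (n + 2) : ℝ) = (n + 3) * (2 * n + 4).choose (n + 1) / (n + 2) := by
    rw [eq_div_iff (by positivity)]
    have h := Nat.choose_succ_right_eq (2 * n + 4) (n + 1)
    rw [show 2 * n + 4 - (n + 1) = n + 3 by omega] at h
    have h_cast := congrArg (Nat.cast (R := ℝ)) h
    push_cast at h_cast
    linear_combination h_cast
  have lower : ((2 * n + 4).choose n : ℝ) = (n + 1) * (2 * n + 4).choose (n + 1) / (n + 4) := by
    rw [eq_div_iff (by positivity)]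
    have h := Nat.choose_succ_right_eq (2 * n + 4) n
    rw [show 2 * n + 4 - n = n + 4 by omega] at h
    have h_cast := congrArg (Nat.cast (R := ℝ)) h
    push_cast at h_cast
    linear_combination -h_cast
  rw [central, middle, lower]
  field_simp
  ring

/-- **Binomial coefficient identity** (end of the proof of Lemma 3 of the paper): for `k ≥ 4`,
`∑_{r=1}^{k-2} ∑_{s=1}^{k-1} C(r-1+s, r-1) C(2k-r-2-s, k-r-2)
   = ((2k)! / (k!)²) ((k-2) / (2(2k-1))) (k - 3 + 4/(k+1))`. -/
theorem binomial_sum_identity (k : ℕ) (hk : 4 ≤ k) :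
    (∑ r ∈ Finset.Icc 1 (k - 2), ∑ s ∈ Finset.Icc 1 (k - 1),
        ((Nat.choose (r - 1 + s) (r - 1) : ℝ) * (Nat.choose (2 * k - r - 2 - s) (k - r - 2) : ℝ)))
      = ((Nat.factorial (2 * k) : ℝ) / (Nat.factorial k : ℝ) ^ 2)
        * (((k : ℝ) - 2) / (2 * (2 * (k : ℝ) - 1)))
        * ((k : ℝ) - 3 + 4 / ((k : ℝ) + 1)) := by
  obtain ⟨n, rfl⟩ : ∃ n, k = n + 3 := ⟨k - 3, by omega⟩
  have reindex : ∑ r ∈ Icc 1 (n + 3 - 2), ∑ s ∈ Icc 1 (n + 3 - 1),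
        ((Nat.choose (r - 1 + s) (r - 1) : ℝ)
          * (Nat.choose (2 * (n + 3) - r - 2 - s) (n + 3 - r - 2) : ℝ))
      = ((∑ i ∈ range (n + 1), ∑ s ∈ Icc 1 (n + 2),
          (i + s).choose i * (n - i + (n + 3 - s)).choose (n - i) : ℕ) : ℝ) := by
    rw [sum_Icc_one_eq_sum_range]
    push_cast
    refine sum_congr rfl fun i hi ↦ sum_congr rfl fun s hs ↦ ?_
    rw [mem_range] at hi
    rw [mem_Icc] at hs
    congr 3 <;> omega
  have count := congrArg (Nat.cast (R := ℝ))
    (sum_range_sum_Icc_choose_mul_choose_add_two_mul_choose n)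
  simp only [Nat.cast_add, Nat.cast_mul, Nat.cast_ofNat, Nat.cast_one] at count
  rw [reindex, ← cast_centralBinom, eq_sub_of_add_eq count, succ_mul_choose_sub_two_mul_choose]
  push_cast
  ring
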